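/- Let (X, π) be a compact Hausdorff pretopological space, f : X → Y a surjection with each fiber f⁻(y) cover-compact, and σ the θ-quotient convergence on Y. Then (Y, σ) is a Hausdorff pretopological space whose vicinity filter at y is generated by {f^#[W] : W a vicinity of f⁻(y)}, where f^#[A] = {y ∈ Y : f⁻(y) ⊆ A}. -/

import Mathlib

open Set Filter

/-- A pretopological space: a vicinity filter at each point containing the point. -/
structure Pretop (X : Type*) where
  V : X → Filter X
  pure_le : ∀ x : X, (pure x : Filter X) ≤ V x

/-- Two filters meet (`F # G`). -/
def Meets {X : Type*} (F G : Filter X) : Prop :=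
  ∀ A ∈ F, ∀ B ∈ G, (A ∩ B).Nonempty

namespace Pretop

variable {X Y : Type*} (π : Pretop X)

/-- Convergence: `F → x` iff `F ⊇ V x`. -/
def Conv (F : Filter X) (x : X) : Prop := F ≤ π.V x

/-- Adherence of a filter. -/
def adh (F : Filter X) : Set X := {x | Meets (π.V x) F}

/-- Adherence of a set (adherence of its principal filter). -/
def adhS (A : Set X) : Set X := {x | ∀ U ∈ π.V x, (U ∩ A).Nonempty}

/-- Inherence of a set. -/
def inh (A : Set X) : Set X := (π.adhS Aᶜ)ᶜ

/-- A compact pretopological space: every proper filter has nonempty adherence. -/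
def IsCompactPre : Prop := ∀ F : Filter X, F.NeBot → (π.adh F).Nonempty

/-- Hausdorff: distinct points have disjoint vicinities. -/
def HausdorffPre : Prop :=
  ∀ x y : X, x ≠ y → ∃ U ∈ π.V x, ∃ W ∈ π.V y, U ∩ W = ∅

/-- `F` is compact at `A`: every filter meeting `F` has adherence meeting `A`. -/
def CompactAt (F : Filter X) (A : Set X) : Prop :=
  ∀ G : Filter X, Meets G F → (π.adh G ∩ A).Nonempty

/-- A cover of `A`: every point of `A` has a member of `C` as a vicinity. -/
def IsCover (C : Set (Set X)) (A : Set X) : Prop :=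
  ∀ x ∈ A, ∃ U ∈ C, U ∈ π.V x

/-- Cover-compactness. -/
def CoverCompact (A : Set X) : Prop :=
  ∀ C : Set (Set X), π.IsCover C A →
    ∃ D : Finset (Set X), ↑D ⊆ C ∧ A ⊆ π.inh (⋃ U ∈ D, U)

lemma mem_of_vicinity {x : X} {U : Set X} (h : U ∈ π.V x) : x ∈ U := π.pure_le x h

lemma subset_adhS (A : Set X) : A ⊆ π.adhS A :=
  fun x hx U hU => ⟨x, π.mem_of_vicinity hU, hx⟩

lemma adhS_mono {A B : Set X} (h : A ⊆ B) : π.adhS A ⊆ π.adhS B :=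
  fun x hx U hU => (hx U hU).imp fun y hy => ⟨hy.1, h hy.2⟩

lemma adhS_empty : π.adhS (∅ : Set X) = ∅ := by
  ext x
  simp only [adhS, mem_setOf_eq, Set.inter_empty, Set.mem_empty_iff_false, iff_false]
  intro h
  simpa using h univ univ_mem

lemma adhS_union (A B : Set X) : π.adhS (A ∪ B) = π.adhS A ∪ π.adhS B := by
  apply Subset.antisymm
  · intro x hx
    by_contra hc
    simp only [Set.mem_union, not_or] at hc
    obtain ⟨h1, h2⟩ := hc
    simp only [adhS, mem_setOf_eq, not_forall] at h1 h2
    obtain ⟨U, hU, hUA⟩ := h1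
    obtain ⟨W, hW, hWB⟩ := h2
    obtain ⟨z, hz⟩ := hx (U ∩ W) (inter_mem hU hW)
    rcases hz.2 with hA | hB
    · exact hUA ⟨z, hz.1.1, hA⟩
    · exact hWB ⟨z, hz.1.2, hB⟩
  · exact Set.union_subset (π.adhS_mono Set.subset_union_left)
      (π.adhS_mono Set.subset_union_right)

lemma inh_mono {A B : Set X} (h : A ⊆ B) : π.inh A ⊆ π.inh B :=
  Set.compl_subset_compl.mpr (π.adhS_mono (Set.compl_subset_compl.mpr h))

lemma inh_inter (A B : Set X) : π.inh (A ∩ B) = π.inh A ∩ π.inh B := by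
  simp only [inh, Set.compl_inter, adhS_union, Set.compl_union]

lemma inh_univ : π.inh (univ : Set X) = univ := by
  simp [inh, adhS_empty]

lemma inh_subset (A : Set X) : π.inh A ⊆ A := by
  intro x hx
  by_contra hxA
  exact hx (π.subset_adhS Aᶜ hxA)

/-- The filter `F¹` of members of `F` whose inherence also belongs to `F`. -/
def F1 (F : Filter X) : Filter X where
  sets := {A | A ∈ F ∧ π.inh A ∈ F}
  univ_sets := ⟨univ_mem, by rw [π.inh_univ]; exact univ_mem⟩
  sets_of_superset := fun hA hAB =>
    ⟨mem_of_superset hA.1 hAB, mem_of_superset hA.2 (π.inh_mono hAB)⟩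
  inter_sets := fun hA hB =>
    ⟨inter_mem hA.1 hB.1, by rw [π.inh_inter]; exact inter_mem hA.2 hB.2⟩

lemma mem_F1 {F : Filter X} {A : Set X} : A ∈ π.F1 F ↔ A ∈ F ∧ π.inh A ∈ F := Iff.rfl

/-- The partial regularization `rπ`: vicinities generated by adherences of vicinities. -/
def rpre : Pretop X where
  V x := (π.V x).lift' π.adhS
  pure_le x := le_lift'.mpr fun U hU =>
    mem_pure.mpr (π.subset_adhS U (π.mem_of_vicinity hU))

lemma mem_rpre {x : X} {A : Set X} :
    A ∈ (π.rpre).V x ↔ ∃ U ∈ π.V x, π.adhS U ⊆ A :=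
  mem_lift'_sets fun _ _ h => π.adhS_mono h

end Pretop

/-- Continuity of maps between pretopological spaces. -/
def ContPre {X Y : Type*} (π : Pretop X) (τ : Pretop Y) (f : X → Y) : Prop :=
  ∀ x : X, ∀ W ∈ τ.V (f x), ∃ U ∈ π.V x, f '' U ⊆ W

/-- Perfect maps between pretopological spaces. -/
def PerfectPre {X Y : Type*} (π : Pretop X) (τ : Pretop Y) (f : X → Y) : Prop :=
  ∀ (F : Filter Y) (y : Y), τ.Conv F y → π.CompactAt (F.comap f) (f ⁻¹' {y})

/-- The filter of vicinities of a set `A`. -/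
def VSet {X : Type*} (π : Pretop X) (A : Set X) : Filter X where
  sets := {V | A ⊆ π.inh V}
  univ_sets := by simp [π.inh_univ]
  sets_of_superset := fun h hsub => h.trans (π.inh_mono hsub)
  inter_sets := fun h1 h2 => by
    rw [Set.mem_setOf_eq, π.inh_inter]; exact Set.subset_inter h1 h2

lemma mem_VSet {X : Type*} {π : Pretop X} {A V : Set X} :
    V ∈ VSet π A ↔ A ⊆ π.inh V := Iff.rfl

/-- `f^#[A] = {y : f⁻¹(y) ⊆ A}`. -/
def fsharp {X Y : Type*} (f : X → Y) (A : Set X) : Set Y := {y | f ⁻¹' {y} ⊆ A}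

/-- The θ-quotient pretopology on `Y`. -/
def thetaQuot {X Y : Type*} (π : Pretop X) (f : X → Y) : Pretop Y where
  V y := (VSet π (f ⁻¹' {y})).lift' (fsharp f)
  pure_le y := le_lift'.mpr fun V hV =>
    mem_pure.mpr (fun x hx => π.inh_subset V ((mem_VSet.mp hV) hx))

/-- Strong irreducibility. -/
def StronglyIrreducible {X Y : Type*} (π : Pretop X) (f : X → Y) : Prop :=
  ∀ U V : Set X, (π.inh U).Nonempty → (π.inh V).Nonempty → (U ∩ V).Nonempty →
    ∃ y : Y, f ⁻¹' {y} ⊆ U ∩ V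

/-- The simple extension `Y⁺` determined by a dense subset `S`. -/
def extPlus {X : Type*} (ρ : Pretop X) (S : Set X) : Pretop X where
  V p := (ρ.V p).lift' (fun W => insert p (W ∩ S))
  pure_le p := le_lift'.mpr fun W _ => mem_pure.mpr (Set.mem_insert p _)

/-- `o(A) = {p : ∃ W ∈ V(p), W ∩ S = A}`. -/
def oSet {X : Type*} (ρ : Pretop X) (S : Set X) (A : Set X) : Set X :=
  {p | ∃ W ∈ ρ.V p, W ∩ S = A}

/-- The strict extension `Y^#` determined by a dense subset `S`. -/
def extSharp {X : Type*} (ρ : Pretop X) (S : Set X) : Pretop X where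
  V p := (ρ.V p).lift' (fun W => oSet ρ S (W ∩ S))
  pure_le p := le_lift'.mpr fun W hW => mem_pure.mpr ⟨W, hW, rfl⟩

/-- The θ-pretopology of a topological space: vicinities are closed neighborhoods. -/
def theta (X : Type*) [TopologicalSpace X] : Pretop X where
  V x := (nhds x).lift' closure
  pure_le x := le_lift'.mpr fun U hU =>
    mem_pure.mpr (subset_closure (mem_of_mem_nhds hU))

/-!
A set is a vicinity of `A` iff it is a vicinity of every point of `A`, and `f^#[W] ∈ F` iff
`W ∈ f⁻(F)`. Hence `F → y` in `thetaQuot π f` says exactly that `f⁻(F)` refines the vicinity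
filter of the fibre `f⁻(y)`, which is the second description of `σ`. Both descriptions agree
because the fibre is cover-compact: a filter disjoint from the vicinity filter of each point of a
cover-compact set is disjoint from the vicinity filter of the set. Applied twice, the same
principle separates two distinct fibres of the Hausdorff space `X` by disjoint vicinities `W₁`,
`W₂`; as `f` is surjective, `f^#[W₁]` and `f^#[W₂]` are then disjoint.
-/

lemma meets_iff_not_disjoint {X : Type*} {F G : Filter X} : Meets F G ↔ ¬Disjoint F G := by
  simp [Meets, Filter.disjoint_iff, Set.not_disjoint_iff_nonempty_inter]

namespace Pretop

variable {X : Type*} {π : Pretop X}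

lemma mem_inh_iff {x : X} {W : Set X} : x ∈ π.inh W ↔ W ∈ π.V x := by
  simp only [inh, adhS, mem_compl_iff, mem_ofPred_eq, not_forall, inter_compl_nonempty_iff,
    not_not, exists_prop, exists_mem_subset_iff]

lemma mem_adh_iff {G : Filter X} {x : X} : x ∈ π.adh G ↔ ¬Disjoint (π.V x) G :=
  meets_iff_not_disjoint

lemma HausdorffPre.disjoint_V (hH : π.HausdorffPre) {x y : X} (hxy : x ≠ y) :
    Disjoint (π.V x) (π.V y) := by
  obtain ⟨U, hU, W, hW, hUW⟩ := hH x y hxy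
  exact Filter.disjoint_iff.mpr ⟨U, hU, W, hW, Set.disjoint_iff_inter_eq_empty.mpr hUW⟩

/-- `VSet π A` is `⨆ x ∈ A, π.V x`, and disjointness from `L` does not pass to such suprema in
general: cover-compactness of `A` supplies it. -/
lemma CoverCompact.disjoint_VSet {A : Set X} (hA : π.CoverCompact A) {L : Filter X}
    (h : ∀ x ∈ A, Disjoint (π.V x) L) : Disjoint (VSet π A) L := by
  have hcover : π.IsCover {U | Uᶜ ∈ L} A := fun x hx => by
    obtain ⟨U, hU, B, hB, hUB⟩ := Filter.disjoint_iff.mp (h x hx)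
    exact ⟨U, mem_of_superset hB hUB.subset_compl_left, hU⟩
  obtain ⟨D, hDC, hAD⟩ := hA _ hcover
  have hcompl : (⋃ U ∈ D, U)ᶜ ∈ L := by
    simpa only [compl_iUnion₂] using (biInter_finset_mem D).mpr fun U hU => hDC hU
  exact Filter.disjoint_iff.mpr ⟨_, mem_VSet.mpr hAD, _, hcompl, disjoint_compl_right⟩

lemma HausdorffPre.disjoint_VSet (hH : π.HausdorffPre) {A B : Set X} (hA : π.CoverCompact A)
    (hB : π.CoverCompact B) (hAB : Disjoint A B) : Disjoint (VSet π A) (VSet π B) :=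
  hA.disjoint_VSet fun _ hx =>
    (hB.disjoint_VSet fun _ hb => hH.disjoint_V fun h => hAB.ne_of_mem hx hb h.symm).symm

lemma CompactAt.le_VSet {H : Filter X} {A : Set X} (h : π.CompactAt H A) : H ≤ VSet π A := by
  intro W hW
  by_contra hWH
  set G := H ⊓ 𝓟 Wᶜ
  have hG : G ≠ ⊥ := fun hbot => hWH (mem_iff_inf_principal_compl.mpr hbot)
  have hGH : Meets G H :=
    meets_iff_not_disjoint.mpr fun hd => hG (hd.eq_bot_of_le inf_le_left)
  obtain ⟨x, hxG, hxA⟩ := h G hGH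
  refine mem_adh_iff.mp hxG (Filter.disjoint_iff.mpr ?_)
  exact ⟨W, mem_inh_iff.mp (mem_VSet.mp hW hxA), Wᶜ, mem_inf_of_right (mem_principal_self _),
    disjoint_compl_right⟩

lemma CoverCompact.compactAt_of_le_VSet {H : Filter X} {A : Set X} (hA : π.CoverCompact A)
    (hH : H ≤ VSet π A) : π.CompactAt H A := by
  intro G hGH
  by_contra hGA
  have hdisj : ∀ x ∈ A, Disjoint (π.V x) G := fun x hx => by
    by_contra h
    exact hGA ⟨x, mem_adh_iff.mpr h, hx⟩
  exact meets_iff_not_disjoint.mp hGH ((hA.disjoint_VSet hdisj).symm.mono_right hH)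

lemma CoverCompact.compactAt_iff {H : Filter X} {A : Set X} (hA : π.CoverCompact A) :
    π.CompactAt H A ↔ H ≤ VSet π A :=
  ⟨CompactAt.le_VSet, hA.compactAt_of_le_VSet⟩

end Pretop

section ThetaQuot

variable {X Y : Type*} {π : Pretop X} {f : X → Y}

lemma fsharp_mem_iff_mem_comap {F : Filter Y} {W : Set X} : fsharp f W ∈ F ↔ W ∈ F.comap f :=
  mem_comap'.symm

lemma disjoint_fsharp (hs : Function.Surjective f) {U W : Set X} (hUW : Disjoint U W) :
    Disjoint (fsharp f U) (fsharp f W) := by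
  refine Set.disjoint_left.mpr fun y hyU hyW => ?_
  obtain ⟨x, rfl⟩ := hs y
  exact Set.disjoint_left.mp hUW (hyU rfl) (hyW rfl)

lemma thetaQuot_conv_iff {F : Filter Y} {y : Y} :
    (thetaQuot π f).Conv F y ↔ F.comap f ≤ VSet π (f ⁻¹' {y}) := by
  simp only [Pretop.Conv, thetaQuot, le_lift', fsharp_mem_iff_mem_comap]
  rfl

lemma thetaQuot_hausdorffPre (hH : π.HausdorffPre) (hs : Function.Surjective f)
    (hfib : ∀ y : Y, π.CoverCompact (f ⁻¹' {y})) : (thetaQuot π f).HausdorffPre := by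
  intro y₁ y₂ hne
  have hfibers : Disjoint (f ⁻¹' {y₁}) (f ⁻¹' {y₂}) :=
    (Set.disjoint_singleton.mpr hne).preimage f
  obtain ⟨U, hU, W, hW, hUW⟩ :=
    Filter.disjoint_iff.mp (hH.disjoint_VSet (hfib y₁) (hfib y₂) hfibers)
  exact ⟨fsharp f U, mem_lift' hU, fsharp f W, mem_lift' hW,
    Set.disjoint_iff_inter_eq_empty.mp (disjoint_fsharp hs hUW)⟩

end ThetaQuot

theorem thetaQuot_is_hausdorff_pretopology_general {X Y : Type*} (π : Pretop X) (f : X → Y)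
    (hH : π.HausdorffPre) (hs : Function.Surjective f)
    (hfib : ∀ y : Y, π.CoverCompact (f ⁻¹' {y})) :
    (∀ (F : Filter Y) (y : Y),
      π.CompactAt (F.comap f) (f ⁻¹' {y}) ↔ (thetaQuot π f).Conv F y) ∧
    (thetaQuot π f).HausdorffPre :=
  ⟨fun _ y => (hfib y).compactAt_iff.trans thetaQuot_conv_iff.symm,
    thetaQuot_hausdorffPre hH hs hfib⟩

/-- The θ-quotient convergence `σ` is a Hausdorff pretopology whose vicinity filter at
`y` is generated by `{f^#[W] : W a vicinity of f⁻¹(y)}` (which is exactly the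
pretopology `thetaQuot π f`). -/
theorem thetaQuot_is_hausdorff_pretopology {X Y : Type*} (π : Pretop X) (f : X → Y)
    (hc : π.IsCompactPre) (hH : π.HausdorffPre) (hs : Function.Surjective f)
    (hfib : ∀ y : Y, π.CoverCompact (f ⁻¹' {y})) :
    (∀ (F : Filter Y) (y : Y),
      π.CompactAt (F.comap f) (f ⁻¹' {y}) ↔ (thetaQuot π f).Conv F y) ∧
    (thetaQuot π f).HausdorffPre :=
  thetaQuot_is_hausdorff_pretopology_general π f hH hs hfib
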